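/- arXiv:2407.02589 — 3 statements merged into one kernel-verified Lean document; each statement's English description precedes it below -/
import Mathlib

section
/- If d+2 points in ℝ^d are in general position (every d+1 of them are affinely independent), then the Radon partition is unique up to swapping the two sides: if (A, Aᶜ) and (B, Bᶜ) are both partitions whose parts have intersecting convex hulls, then B = A or B = Aᶜ. -/
/-!
A point in the convex hulls of both `x '' A` and `x '' Aᶜ` gives an affine dependence `c`
(`∑ cᵢ = 0`, `∑ cᵢ xᵢ = 0`) with `c ≥ 0` on `A` and `c ≤ 0` off `A`, hence `A = {i | 0 < cᵢ}`
once `c` has no zero entry. In general position an affine dependence vanishing at one index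
is a dependence of `d + 1` affinely independent points, so it vanishes everywhere. Hence every
nonzero dependence has full support and any two are proportional; the Radon partitions of
`A` and `B` therefore come from `c` and `t • c` with `t ≠ 0`, and the sign of `t` decides
between `B = A` and `B = Aᶜ`.
-/

open Finset

section AffineDependence

variable {k E ι : Type*} [Ring k] [AddCommGroup E] [Module k E] [Fintype ι]

def IsAffineDependence (x : ι → E) (c : ι → k) : Prop :=
  ∑ i, c i = 0 ∧ ∑ i, c i • x i = 0

variable {x : ι → E} {c e : ι → k}

theorem IsAffineDependence.sub (hc : IsAffineDependence x c) (he : IsAffineDependence x e) :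
    IsAffineDependence x (c - e) := by
  simp only [IsAffineDependence, Pi.sub_apply, sum_sub_distrib, sub_smul] at *
  simp [hc, he]

theorem IsAffineDependence.smul (hc : IsAffineDependence x c) (t : k) :
    IsAffineDependence x (t • c) := by
  simp only [IsAffineDependence, Pi.smul_apply, smul_eq_mul, ← mul_sum, mul_smul, ← smul_sum]
    at *
  simp [hc]

theorem IsAffineDependence.eq_zero_of_apply_eq_zero [DecidableEq ι] {i : ι}
    (hx : AffineIndependent k (fun j : (univ.erase i : Finset ι) => x j))
    (hc : IsAffineDependence x c) (hci : c i = 0) : c = 0 := by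
  have hsum : ∑ j : (univ.erase i : Finset ι), c j = 0 := by
    rw [sum_coe_sort, sum_erase _ hci, hc.1]
  have hvsum : ∑ j : (univ.erase i : Finset ι), c j • x j = 0 := by
    rw [sum_coe_sort (univ.erase i) (fun j => c j • x j), sum_erase _ (by simp [hci]), hc.2]
  funext j
  by_cases hji : j = i
  · rw [hji, hci, Pi.zero_apply]
  · exact hx.eq_zero_of_sum_eq_zero hsum hvsum ⟨j, mem_erase.2 ⟨hji, mem_univ j⟩⟩ (mem_univ _)

theorem IsAffineDependence.apply_ne_zero [DecidableEq ι]
    (hx : ∀ i, AffineIndependent k (fun j : (univ.erase i : Finset ι) => x j))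
    (hc : IsAffineDependence x c) (hc0 : c ≠ 0) (i : ι) : c i ≠ 0 :=
  fun hci => hc0 (hc.eq_zero_of_apply_eq_zero (hx i) hci)

end AffineDependence

section Field

variable {k E ι : Type*} [Field k] [AddCommGroup E] [Module k E] [Fintype ι] [DecidableEq ι]
  {x : ι → E} {c e : ι → k}

theorem IsAffineDependence.eq_smul {i : ι}
    (hx : AffineIndependent k (fun j : (univ.erase i : Finset ι) => x j))
    (hc : IsAffineDependence x c) (hci : c i ≠ 0) (he : IsAffineDependence x e) :
    e = (e i / c i) • c :=
  sub_eq_zero.1 <| (he.sub (hc.smul _)).eq_zero_of_apply_eq_zero hx <| by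
    simp [div_mul_cancel₀ _ hci]

end Field

section Convex

variable {𝕜 E ι : Type*} [Field 𝕜] [LinearOrder 𝕜] [IsStrictOrderedRing 𝕜]
  [AddCommGroup E] [Module 𝕜 E] [Fintype ι] {x : ι → E} {S : Set ι}

theorem exists_weights_of_mem_convexHull_image {p : E} (hp : p ∈ convexHull 𝕜 (x '' S)) :
    ∃ w : ι → 𝕜, (∀ i, 0 ≤ w i) ∧ (∀ i ∉ S, w i = 0) ∧ ∑ i, w i = 1 ∧ ∑ i, w i • x i = p := by
  classical
  obtain ⟨κ, _, v, z, hv0, hv1, hz, rfl⟩ := mem_convexHull_iff_exists_fintype.1 hp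
  choose g hgS hgz using fun l => hz l
  -- push the weights of the points `z l = x (g l)` forward along `g`
  refine ⟨fun i => ∑ l with g l = i, v l, fun i => sum_nonneg fun l _ => hv0 l, ?_, ?_, ?_⟩
  · intro i hi
    exact sum_eq_zero fun l hl => absurd ((mem_filter.1 hl).2 ▸ hgS l) hi
  · exact (sum_fiberwise univ g v).trans hv1
  · simp_rw [sum_smul, ← hgz]
    rw [← sum_fiberwise univ g (fun l => v l • x (g l))]
    exact sum_congr rfl fun i _ => sum_congr rfl fun l hl => by rw [(mem_filter.1 hl).2]

theorem exists_isAffineDependence_of_convexHull_inter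
    (h : (convexHull 𝕜 (x '' S) ∩ convexHull 𝕜 (x '' Sᶜ)).Nonempty) :
    ∃ c : ι → 𝕜, IsAffineDependence x c ∧ c ≠ 0 ∧ (∀ i ∈ S, 0 ≤ c i) ∧ ∀ i ∉ S, c i ≤ 0 := by
  obtain ⟨p, hpS, hpSc⟩ := h
  obtain ⟨a, ha0, haS, ha1, hax⟩ := exists_weights_of_mem_convexHull_image hpS
  obtain ⟨b, hb0, hbS, hb1, hbx⟩ := exists_weights_of_mem_convexHull_image hpSc
  have hbS' : ∀ i ∈ S, b i = 0 := fun i hi => hbS i (not_not_intro hi)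
  refine ⟨a - b, ?_, ?_, fun i hi => ?_, fun i hi => ?_⟩
  · simp [IsAffineDependence, sum_sub_distrib, sub_smul, ha1, hb1, hax, hbx]
  · intro hab
    have ha : a = 0 := funext fun i => by
      by_cases hi : i ∈ S
      · simpa [hbS' i hi] using congr_fun hab i
      · exact haS i hi
    simp [ha] at ha1
  · simp [hbS' i hi, ha0 i]
  · simp [haS i hi, hb0 i]

end Convex

theorem eq_setOf_pos_of_nonneg_of_nonpos {𝕜 ι : Type*} [Zero 𝕜] [LinearOrder 𝕜] {S : Set ι}
    {c : ι → 𝕜} (hc : ∀ i, c i ≠ 0) (hS : ∀ i ∈ S, 0 ≤ c i) (hSc : ∀ i ∉ S, c i ≤ 0) :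
    S = {i | 0 < c i} :=
  Set.ext fun i => ⟨fun hi => (hS i hi).lt_of_ne' (hc i),
    fun hpos => by_contra fun hi => (hSc i hi).not_gt hpos⟩

theorem radon_partition_unique (d : ℕ) (x : Fin (d + 2) → EuclideanSpace ℝ (Fin d))
    (hgen : ∀ s : Finset (Fin (d + 2)), s.card = d + 1 →
      AffineIndependent ℝ (fun i : s => x i))
    (A B : Set (Fin (d + 2)))
    (hA : (convexHull ℝ (x '' A) ∩ convexHull ℝ (x '' Aᶜ)).Nonempty)
    (hB : (convexHull ℝ (x '' B) ∩ convexHull ℝ (x '' Bᶜ)).Nonempty) :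
    B = A ∨ B = Aᶜ := by
  have hind : ∀ i, AffineIndependent ℝ (fun j : (univ.erase i : Finset (Fin (d + 2))) => x j) :=
    fun i => hgen (univ.erase i) (by simp)
  obtain ⟨c, hc, hc0, hcA, hcAc⟩ := exists_isAffineDependence_of_convexHull_inter hA
  obtain ⟨e, he, he0, heB, heBc⟩ := exists_isAffineDependence_of_convexHull_inter hB
  have hcne := hc.apply_ne_zero hind hc0
  have hene := he.apply_ne_zero hind he0
  rw [eq_setOf_pos_of_nonneg_of_nonpos hcne hcA hcAc,
    eq_setOf_pos_of_nonneg_of_nonpos hene heB heBc, hc.eq_smul (hind 0) (hcne 0) he]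
  rcases (div_ne_zero (hene 0) (hcne 0)).lt_or_gt with ht | ht
  · right
    ext i
    simp only [Set.mem_ofPred_eq, Set.mem_compl_iff, Pi.smul_apply, smul_eq_mul,
      mul_pos_iff, ht, ht.not_gt, false_and, true_and, false_or, not_lt, (hcne i).le_iff_lt]
  · left
    ext i
    simp only [Set.mem_ofPred_eq, Pi.smul_apply, smul_eq_mul, mul_pos_iff_of_pos_left ht]
end

section
/- Let x : Fin n → ℝ^d and let M be the (d+1) × n matrix whose j-th column is x j with an extra coordinate equal to 1. If v is a nonzero vector in the kernel of M, then setting A = {i | v i ≥ 0} and B = {i | v i < 0}, the convex hulls of x '' A and x '' B intersect. -/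
open Finset

theorem Convex.convexHull_nonneg_inter_convexHull_neg_nonempty {ι 𝕜 E : Type*} [Fintype ι]
    [Field 𝕜] [LinearOrder 𝕜] [IsStrictOrderedRing 𝕜] [AddCommGroup E] [Module 𝕜 E]
    {f : ι → E} {w : ι → 𝕜} (hw : ∑ i, w i = 0) (hwf : ∑ i, w i • f i = 0) (hw0 : w ≠ 0) :
    (convexHull 𝕜 (f '' {i | 0 ≤ w i}) ∩ convexHull 𝕜 (f '' {i | w i < 0})).Nonempty := by
  classical
  let I : Finset ι := {i | 0 ≤ w i}
  let J : Finset ι := {i | w i < 0}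
  have hJI : ∑ j ∈ J, w j + ∑ i ∈ I, w i = 0 := by
    simpa only [hw, not_lt] using sum_filter_add_sum_filter_not univ (fun i ↦ w i < 0) w
  have hI : 0 < ∑ i ∈ I, w i := by
    obtain ⟨k, hk⟩ := Function.ne_iff.mp hw0
    obtain ⟨p, -, hp⟩ := exists_pos_of_sum_zero_of_exists_nonzero w hw ⟨k, mem_univ k, hk⟩
    exact sum_pos' (fun i hi ↦ (mem_filter.1 hi).2) ⟨p, by simp [I, hp.le], hp⟩
  -- Both parts have opposite total weights and opposite weighted sums, so equal centres of mass.
  have hJ : centerMass J w f = centerMass I w f := centerMass_of_sum_add_sum_eq_zero hJI <| by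
    simpa only [hwf, not_lt] using
      sum_filter_add_sum_filter_not univ (fun i ↦ w i < 0) (fun i ↦ w i • f i)
  refine ⟨centerMass I w f, ?_, ?_⟩
  · exact centerMass_mem_convexHull _ (fun i hi ↦ (mem_filter.1 hi).2) hI
      (fun i hi ↦ Set.mem_image_of_mem f (mem_filter.1 hi).2)
  · rw [← hJ]
    exact centerMass_mem_convexHull_of_nonpos _ (fun i hi ↦ (mem_filter.1 hi).2.le)
      (by linarith) (fun i hi ↦ Set.mem_image_of_mem f (mem_filter.1 hi).2)

section Homogenized

variable {d n : ℕ} {x : Fin n → EuclideanSpace ℝ (Fin d)} {M : Matrix (Fin (d + 1)) (Fin n) ℝ}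
  {v : Fin n → ℝ}

theorem sum_eq_zero_of_mulVec_eq_zero_of_last_row_one (hM1 : ∀ j, M (Fin.last d) j = 1)
    (hv : M.mulVec v = 0) : ∑ j, v j = 0 := by
  simpa [Matrix.mulVec, dotProduct, hM1] using congrFun hv (Fin.last d)

theorem sum_smul_eq_zero_of_mulVec_eq_zero_of_castSucc_rows
    (hM : ∀ (i : Fin d) (j : Fin n), M i.castSucc j = x j i) (hv : M.mulVec v = 0) :
    ∑ j, v j • x j = 0 := by
  ext i
  simpa [Matrix.mulVec, dotProduct, hM, mul_comm] using congrFun hv i.castSucc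

end Homogenized

theorem kernel_vector_gives_radon (d n : ℕ) (x : Fin n → EuclideanSpace ℝ (Fin d))
    (M : Matrix (Fin (d + 1)) (Fin n) ℝ)
    (hM : ∀ (i : Fin d) (j : Fin n), M i.castSucc j = x j i)
    (hM1 : ∀ j : Fin n, M (Fin.last d) j = 1)
    (v : Fin n → ℝ) (hv : M.mulVec v = 0) (hv0 : v ≠ 0) :
    (convexHull ℝ (x '' {i | 0 ≤ v i}) ∩ convexHull ℝ (x '' {i | v i < 0})).Nonempty :=
  Convex.convexHull_nonneg_inter_convexHull_neg_nonempty
    (sum_eq_zero_of_mulVec_eq_zero_of_last_row_one hM1 hv)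
    (sum_smul_eq_zero_of_mulVec_eq_zero_of_castSucc_rows hM hv) hv0
end

section
/- For n points in general position in ℝ^d (n ≥ d+1), the number of affine separations, i.e., unordered partitions {A, Aᶜ} of the index set such that some affine hyperplane strictly separates the two parts, equals ∑_{i=0}^{d} C(n-1, i). -/
/-!
Cover's counting argument. Lifting each point `x i` to `(x i, 1)` turns strict affine separations
of the points into dichotomies of the lifted vectors by hyperplanes through the origin, and affine
general position of the points into linear independence of any `d + 1` of the lifted vectors.

Let `C(N, D)` count the (ordered) linear dichotomies of `N` vectors in general position in
dimension `D`. Every dichotomy of the first `N - 1` vectors extends to the last vector `v`, and it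
extends in both ways exactly when it is realised by some `w ⊥ v` (perturb `w` along `v` to either
side). Those are the dichotomies of the projections onto `vᗮ`, which are in general position in
dimension `D - 1`. Hence `C(N, D) = C(N - 1, D) + C(N - 1, D - 1)`, so that
`C(N, D) = 2 ∑_{i < D} (N - 1).choose i`, and each unordered separation `{A, Aᶜ}` is counted twice.
-/

open scoped RealInnerProductSpace
open Filter Topology Set Module

lemma Nat.sum_range_succ_choose_succ (n e : ℕ) :
    ∑ i ∈ Finset.range (e + 1), (n + 1).choose i =
      ∑ i ∈ Finset.range (e + 1), n.choose i + ∑ i ∈ Finset.range e, n.choose i := by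
  rw [Finset.sum_range_succ', Finset.sum_range_succ' (fun i => n.choose i)]
  simp only [Nat.choose_succ_succ', Finset.sum_add_distrib, Nat.choose_zero_right]
  ring

lemma Set.ncard_eq_ncard_image_castSucc_add {n : ℕ} (𝒮 : Set (Set (Fin (n + 1)))) :
    𝒮.ncard = {A : Set (Fin n) | Fin.castSucc '' A ∈ 𝒮}.ncard +
      {A : Set (Fin n) | insert (Fin.last n) (Fin.castSucc '' A) ∈ 𝒮}.ncard := by
  have hinsert_inj :
      Function.Injective fun A : Set (Fin n) => insert (Fin.last n) (Fin.castSucc '' A) :=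
    fun A A' h => by
      ext i
      simpa [Fin.castSucc_ne_last] using congrArg (Fin.castSucc i ∈ ·) h
  have himage₀ : (Fin.castSucc '' ·) '' {A : Set (Fin n) | Fin.castSucc '' A ∈ 𝒮} =
      {B ∈ 𝒮 | Fin.last n ∉ B} := by
    ext B
    constructor
    · rintro ⟨A, hA, rfl⟩
      exact ⟨hA, by simp [Fin.castSucc_ne_last]⟩
    · rintro ⟨hB, hlast⟩
      have hB' : Fin.castSucc '' (Fin.castSucc ⁻¹' B) = B := by
        ext i
        induction i using Fin.lastCases <;> simp [hlast, Fin.castSucc_ne_last]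
      exact ⟨_, by rwa [mem_ofPred_eq, hB'], hB'⟩
  have himage₁ : (fun A : Set (Fin n) => insert (Fin.last n) (Fin.castSucc '' A)) ''
      {A : Set (Fin n) | insert (Fin.last n) (Fin.castSucc '' A) ∈ 𝒮} =
        {B ∈ 𝒮 | Fin.last n ∈ B} := by
    ext B
    constructor
    · rintro ⟨A, hA, rfl⟩
      exact ⟨hA, mem_insert _ _⟩
    · rintro ⟨hB, hlast⟩
      have hB' : insert (Fin.last n) (Fin.castSucc '' (Fin.castSucc ⁻¹' B)) = B := by
        ext i
        induction i using Fin.lastCases <;> simp [hlast, Fin.castSucc_ne_last]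
      exact ⟨_, by rwa [mem_ofPred_eq, hB'], hB'⟩
  rw [← ncard_image_of_injective _ (image_injective.2 (Fin.castSucc_injective n)),
    ← ncard_image_of_injective _ hinsert_inj, himage₀, himage₁, ← ncard_union_eq]
  · congr 1
    ext B
    by_cases h : Fin.last n ∈ B <;> simp [h]
  · exact disjoint_left.2 fun B h₀ h₁ => h₀.2 h₁.2

lemma Set.two_mul_ncard_setOf_pair_compl {α : Type*} [Finite α] [Nonempty α]
    {𝒮 : Set (Set α)} (h𝒮 : ∀ A ∈ 𝒮, Aᶜ ∈ 𝒮) :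
    2 * {p : Set (Set α) | ∃ A, p = {A, Aᶜ} ∧ A ∈ 𝒮}.ncard = 𝒮.ncard := by
  obtain ⟨a⟩ := ‹Nonempty α›
  set 𝒯 := {A ∈ 𝒮 | a ∈ A}
  have hpairs : {p : Set (Set α) | ∃ A, p = {A, Aᶜ} ∧ A ∈ 𝒮} = (fun A => {A, Aᶜ}) '' 𝒯 := by
    ext p
    constructor
    · rintro ⟨A, rfl, hA⟩
      by_cases ha : a ∈ A
      · exact ⟨A, ⟨hA, ha⟩, rfl⟩
      · exact ⟨Aᶜ, ⟨h𝒮 A hA, ha⟩, by simp [pair_comm]⟩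
    · rintro ⟨A, ⟨hA, -⟩, rfl⟩
      exact ⟨A, rfl, hA⟩
  have hinj : InjOn (fun A => ({A, Aᶜ} : Set (Set α))) 𝒯 := by
    rintro A ⟨-, ha⟩ B ⟨-, hb⟩ hAB
    rcases pair_eq_pair_iff.1 hAB with ⟨h, -⟩ | ⟨h, -⟩
    · exact h
    · exact ((h ▸ ha : a ∈ Bᶜ) hb).elim
  have hsplit : 𝒮 = 𝒯 ∪ compl '' 𝒯 := by
    ext A
    have h𝒮' : Aᶜ ∈ 𝒮 ↔ A ∈ 𝒮 := ⟨fun h => compl_compl A ▸ h𝒮 _ h, h𝒮 A⟩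
    by_cases ha : a ∈ A <;>
      simp only [𝒯, mem_union, mem_compl_image, mem_sep_iff, mem_compl_iff, h𝒮', ha] <;> tauto
  rw [hpairs, hinj.ncard_image, hsplit, ncard_union_eq, ncard_image_of_injective _ compl_injective]
  · ring
  · exact disjoint_left.2 fun A hA ⟨B, hB, hBA⟩ => (hBA ▸ hA.2 : a ∈ Bᶜ) hB.2

def InLinearGeneralPosition {ι M : Type*} [AddCommGroup M] [Module ℝ M] (k : ℕ) (y : ι → M) :
    Prop :=
  ∀ s : Finset ι, s.card ≤ k → LinearIndepOn ℝ y s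

namespace InLinearGeneralPosition

variable {ι κ M : Type*} [AddCommGroup M] [Module ℝ M] {k : ℕ} {y : ι → M}

lemma ne_zero (h : InLinearGeneralPosition k y) (hk : 0 < k) (i : ι) : y i ≠ 0 :=
  (h {i} (by rwa [Finset.card_singleton])).ne_zero (by simp)

lemma comp {f : κ → ι} (h : InLinearGeneralPosition k y) (hf : Function.Injective f) :
    InLinearGeneralPosition k (y ∘ f) := fun s hs =>
  LinearIndepOn.comp_of_image (by simpa using h (s.map ⟨f, hf⟩) (by simpa)) hf.injOn

end InLinearGeneralPosition

section LinearDichotomies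

variable {ι E : Type*} [NormedAddCommGroup E] [InnerProductSpace ℝ E]

def LinearlySeparates (w : E) (y : ι → E) (A : Set ι) : Prop :=
  ∀ i, (i ∈ A → 0 < ⟪w, y i⟫) ∧ (i ∉ A → ⟪w, y i⟫ < 0)

def linearDichotomies (y : ι → E) : Set (Set ι) :=
  {A | ∃ w, LinearlySeparates w y A}

namespace LinearlySeparates

variable {w w' : E} {y : ι → E} {A : Set ι}

lemma neg (h : LinearlySeparates w y A) : LinearlySeparates (-w) y Aᶜ := fun i => by
  simp only [inner_neg_left, mem_compl_iff, not_not, Left.neg_pos_iff, neg_lt_zero]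
  exact ⟨(h i).2, (h i).1⟩

lemma add (h : LinearlySeparates w y A) (h' : LinearlySeparates w' y A) :
    LinearlySeparates (w + w') y A := fun i => by
  simp only [inner_add_left]
  exact ⟨fun hi => add_pos ((h i).1 hi) ((h' i).1 hi),
    fun hi => add_neg ((h i).2 hi) ((h' i).2 hi)⟩

lemma smul {c : ℝ} (hc : 0 < c) (h : LinearlySeparates w y A) :
    LinearlySeparates (c • w) y A := fun i => by
  simp only [real_inner_smul_left]
  exact ⟨fun hi => mul_pos hc ((h i).1 hi), fun hi => mul_neg_of_pos_of_neg hc ((h i).2 hi)⟩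

lemma eventually_add_smul [Finite ι] (h : LinearlySeparates w y A) (u : E) :
    ∀ᶠ δ : ℝ in 𝓝 0, LinearlySeparates (w + δ • u) y A := by
  refine eventually_all.2 fun i => ?_
  have hcont : Tendsto (fun δ : ℝ => ⟪w + δ • u, y i⟫) (𝓝 0) (𝓝 ⟪w, y i⟫) := by
    have : Continuous fun δ : ℝ => ⟪w + δ • u, y i⟫ := by fun_prop
    simpa using this.tendsto 0
  by_cases hi : i ∈ A
  · filter_upwards [hcont.eventually (eventually_gt_nhds ((h i).1 hi))] with δ hδ
    exact ⟨fun _ => hδ, fun h' => (h' hi).elim⟩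
  · filter_upwards [hcont.eventually (eventually_lt_nhds ((h i).2 hi))] with δ hδ
    exact ⟨fun h' => (hi h').elim, fun _ => hδ⟩

lemma exists_inner_pos_and_exists_inner_neg [Finite ι] {v : E} (h : LinearlySeparates w y A)
    (hw : ⟪w, v⟫ = 0) (hv : v ≠ 0) :
    (∃ w', LinearlySeparates w' y A ∧ 0 < ⟪w', v⟫) ∧
      ∃ w', LinearlySeparates w' y A ∧ ⟪w', v⟫ < 0 := by
  have hinner (δ : ℝ) : ⟪w + δ • v, v⟫ = δ * ‖v‖ ^ 2 := by
    rw [inner_add_left, hw, real_inner_smul_left, real_inner_self_eq_norm_sq, zero_add]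
  have hv2 : 0 < ‖v‖ ^ 2 := by positivity
  have hnear := h.eventually_add_smul v
  obtain ⟨δ, hδ, hδpos⟩ := ((hnear.filter_mono nhdsWithin_le_nhds).and
    (self_mem_nhdsWithin (s := Ioi 0))).exists
  obtain ⟨δ', hδ', hδ'neg⟩ := ((hnear.filter_mono nhdsWithin_le_nhds).and
    (self_mem_nhdsWithin (s := Iio 0))).exists
  refine ⟨⟨_, hδ, ?_⟩, ⟨_, hδ', ?_⟩⟩
  · rw [hinner]; exact mul_pos hδpos hv2
  · rw [hinner]; exact mul_neg_of_neg_of_pos hδ'neg hv2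

end LinearlySeparates

lemma compl_mem_linearDichotomies {y : ι → E} {A : Set ι} :
    A ∈ linearDichotomies y → Aᶜ ∈ linearDichotomies y :=
  fun ⟨w, hw⟩ => ⟨-w, hw.neg⟩

lemma linearDichotomies_of_isEmpty [IsEmpty ι] (y : ι → E) : linearDichotomies y = {∅} := by
  ext A
  simp [linearDichotomies, LinearlySeparates, eq_empty_of_isEmpty A]

lemma linearDichotomies_of_subsingleton [Subsingleton E] [Nonempty ι] (y : ι → E) :
    linearDichotomies y = ∅ := by
  simp [linearDichotomies, LinearlySeparates, Subsingleton.elim _ (0 : E)]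

variable {y : ι → E} {v : E}

lemma linearDichotomies_eq_union [Finite ι] (hv : v ≠ 0) :
    linearDichotomies y = {A | ∃ w, LinearlySeparates w y A ∧ 0 < ⟪w, v⟫} ∪
      {A | ∃ w, LinearlySeparates w y A ∧ ⟪w, v⟫ < 0} := by
  refine Subset.antisymm (fun A ⟨w, hw⟩ => ?_)
    (union_subset (fun A ⟨w, hw, _⟩ => ⟨w, hw⟩) (fun A ⟨w, hw, _⟩ => ⟨w, hw⟩))
  rcases lt_trichotomy ⟪w, v⟫ 0 with hneg | hzero | hpos
  · exact Or.inr ⟨w, hw, hneg⟩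
  · exact Or.inl (hw.exists_inner_pos_and_exists_inner_neg hzero hv).1
  · exact Or.inl ⟨w, hw, hpos⟩

lemma setOf_inner_pos_inter_setOf_inner_neg [Finite ι] (hv : v ≠ 0) :
    {A | ∃ w, LinearlySeparates w y A ∧ 0 < ⟪w, v⟫} ∩
        {A | ∃ w, LinearlySeparates w y A ∧ ⟪w, v⟫ < 0} =
      {A | ∃ w ∈ (ℝ ∙ v)ᗮ, LinearlySeparates w y A} := by
  ext A
  simp only [mem_inter_iff, mem_ofPred_eq, Submodule.mem_orthogonal_singleton_iff_inner_left]
  constructor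
  · rintro ⟨⟨wp, hp, hpos⟩, ⟨wn, hn, hneg⟩⟩
    refine ⟨⟪wp, v⟫ • wn + (-⟪wn, v⟫) • wp, ?_, (hn.smul hpos).add (hp.smul (neg_pos.2 hneg))⟩
    simp only [inner_add_left, real_inner_smul_left]
    ring
  · rintro ⟨w, hw0, hw⟩
    exact hw.exists_inner_pos_and_exists_inner_neg hw0 hv

lemma linearDichotomies_orthogonalProjectionOnto (K : Submodule ℝ E)
    [K.HasOrthogonalProjection] (y : ι → E) :
    linearDichotomies (fun i => K.orthogonalProjectionOnto (y i)) =
      {A | ∃ w ∈ K, LinearlySeparates w y A} := by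
  ext A
  constructor
  · rintro ⟨w, hw⟩
    exact ⟨w, w.2, by simpa [LinearlySeparates] using hw⟩
  · rintro ⟨w, hwK, hw⟩
    exact ⟨⟨w, hwK⟩, by simpa [LinearlySeparates] using hw⟩

variable {n k : ℕ}

lemma InLinearGeneralPosition.orthogonalProjectionOnto_castSucc {y : Fin (n + 1) → E}
    (h : InLinearGeneralPosition (k + 1) y) :
    InLinearGeneralPosition k fun i : Fin n =>
      (ℝ ∙ y (Fin.last n))ᗮ.orthogonalProjectionOnto (y i.castSucc) := by
  intro s hs
  have hlast : Fin.last n ∉ Fin.castSucc '' (s : Set (Fin n)) := by simp [Fin.castSucc_ne_last]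
  have hins := h (insert (Fin.last n) (s.map Fin.castSuccEmb))
    (Finset.card_insert_le _ _ |>.trans (by simpa using hs))
  rw [Finset.coe_insert, Finset.coe_map, Fin.coe_castSuccEmb, linearIndepOn_insert hlast] at hins
  obtain ⟨hindep, hnotMem⟩ := hins
  refine LinearIndependent.map (hindep.comp_of_image (Fin.castSucc_injective n).injOn)
    (f := (ℝ ∙ y (Fin.last n))ᗮ.orthogonalProjectionOnto.toLinearMap) ?_
  rw [Submodule.ker_orthogonalProjectionOnto, Submodule.orthogonal_orthogonal,
    Submodule.disjoint_span_singleton' (h.ne_zero k.succ_pos _), ← image_eq_range, image_comp]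
  exact hnotMem

lemma image_castSucc_mem_linearDichotomies_iff {y : Fin (n + 1) → E} {A : Set (Fin n)} :
    Fin.castSucc '' A ∈ linearDichotomies y ↔
      ∃ w, LinearlySeparates w (y ∘ Fin.castSucc) A ∧ ⟪w, y (Fin.last n)⟫ < 0 :=
  exists_congr fun w => by
    simp only [LinearlySeparates, Fin.forall_fin_succ', (Fin.castSucc_injective n).mem_set_image]
    simp [Fin.castSucc_ne_last]

lemma insert_last_image_castSucc_mem_linearDichotomies_iff {y : Fin (n + 1) → E}
    {A : Set (Fin n)} :
    insert (Fin.last n) (Fin.castSucc '' A) ∈ linearDichotomies y ↔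
      ∃ w, LinearlySeparates w (y ∘ Fin.castSucc) A ∧ 0 < ⟪w, y (Fin.last n)⟫ :=
  exists_congr fun w => by
    simp only [LinearlySeparates, Fin.forall_fin_succ', mem_insert_iff,
      (Fin.castSucc_injective n).mem_set_image]
    simp [Fin.castSucc_ne_last, and_comm]

theorem ncard_linearDichotomies_eq_add {y : Fin (n + 1) → E} (hv : y (Fin.last n) ≠ 0) :
    (linearDichotomies y).ncard = (linearDichotomies (y ∘ Fin.castSucc)).ncard +
      (linearDichotomies fun i : Fin n =>
        (ℝ ∙ y (Fin.last n))ᗮ.orthogonalProjectionOnto (y i.castSucc)).ncard := by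
  rw [Set.ncard_eq_ncard_image_castSucc_add]
  simp only [image_castSucc_mem_linearDichotomies_iff,
    insert_last_image_castSucc_mem_linearDichotomies_iff]
  rw [linearDichotomies_orthogonalProjectionOnto, ← setOf_inner_pos_inter_setOf_inner_neg hv,
    linearDichotomies_eq_union hv, add_comm]
  exact (ncard_union_add_ncard_inter _ _).symm

theorem ncard_linearDichotomies [FiniteDimensional ℝ E] {y : Fin (n + 1) → E}
    (hy : InLinearGeneralPosition (finrank ℝ E) y) :
    (linearDichotomies y).ncard = 2 * ∑ i ∈ Finset.range (finrank ℝ E), n.choose i := by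
  induction n generalizing E with
  | zero =>
    rcases hD : finrank ℝ E with _ | D
    · have := Module.finrank_zero_iff.1 hD
      simp [linearDichotomies_of_subsingleton]
    rw [ncard_linearDichotomies_eq_add (hy.ne_zero (by omega) _)]
    simp [linearDichotomies_of_isEmpty, Finset.sum_range_succ']
  | succ n ih =>
    rcases hD : finrank ℝ E with _ | D
    · have := Module.finrank_zero_iff.1 hD
      simp [linearDichotomies_of_subsingleton]
    have hv := hy.ne_zero (by omega) (Fin.last _)
    have : Fact (finrank ℝ E = D + 1) := ⟨hD⟩
    have hK : finrank ℝ (ℝ ∙ y (Fin.last _))ᗮ = D := Submodule.finrank_orthogonal_span_singleton hv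
    have hz := (hD ▸ hy : InLinearGeneralPosition (D + 1) y).orthogonalProjectionOnto_castSucc
    rw [ncard_linearDichotomies_eq_add hv, ih (hy.comp (Fin.castSucc_injective _)), ih (hK ▸ hz),
      hD, hK, Nat.sum_range_succ_choose_succ]
    ring

end LinearDichotomies

section Homogenization

variable {ι F : Type*} [NormedAddCommGroup F] [InnerProductSpace ℝ F]

def affineDichotomies (x : ι → F) : Set (Set ι) :=
  {A | ∃ (w : F) (c : ℝ), (∀ i ∈ A, c < ⟪w, x i⟫) ∧ (∀ i ∈ Aᶜ, ⟪w, x i⟫ < c)}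

def homogenize (p : F) : WithLp 2 (F × ℝ) :=
  WithLp.toLp 2 (p, 1)

lemma inner_homogenize (W : WithLp 2 (F × ℝ)) (p : F) :
    ⟪W, homogenize p⟫ = ⟪W.fst, p⟫ + W.snd := by
  simp [homogenize]

lemma affineDichotomies_eq_linearDichotomies (x : ι → F) :
    affineDichotomies x = linearDichotomies (homogenize ∘ x) := by
  ext A
  constructor
  · rintro ⟨w, c, hA, hAc⟩
    refine ⟨WithLp.toLp 2 (w, -c), fun i => ⟨fun hi => ?_, fun hi => ?_⟩⟩ <;>
      simp only [Function.comp_apply, inner_homogenize, WithLp.toLp_fst, WithLp.toLp_snd]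
    · linarith [hA i hi]
    · linarith [hAc i hi]
  · rintro ⟨W, hW⟩
    refine ⟨W.fst, -W.snd, fun i hi => ?_, fun i hi => ?_⟩
    · linarith [inner_homogenize W (x i) ▸ (hW i).1 hi]
    · linarith [inner_homogenize W (x i) ▸ (hW i).2 hi]

lemma linearIndependent_homogenize_iff {κ : Type*} {p : κ → F} :
    LinearIndependent ℝ (homogenize ∘ p) ↔ AffineIndependent ℝ p := by
  rw [affineIndependent_iff, linearIndependent_iff']
  refine forall₂_congr fun s g => ?_
  have hsum : ∑ i ∈ s, g i • homogenize (p i) =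
      WithLp.toLp 2 (∑ i ∈ s, g i • p i, ∑ i ∈ s, g i) := by
    simp [homogenize, ← WithLp.toLp_sum, Prod.smul_mk, prod_mk_sum]
  simp only [Function.comp_apply, hsum, WithLp.toLp_eq_zero, Prod.mk_eq_zero]
  tauto

lemma inLinearGeneralPosition_homogenize [Fintype ι] {k : ℕ} {x : ι → F}
    (hk : k ≤ Fintype.card ι)
    (hx : ∀ s : Finset ι, s.card = k → AffineIndependent ℝ (fun i : s => x i)) :
    InLinearGeneralPosition k (homogenize ∘ x) := fun _ hs =>
  let ⟨t, hst, ht⟩ := Finset.exists_superset_card_eq hs hk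
  LinearIndepOn.mono (linearIndependent_homogenize_iff.2 (hx t ht)) hst

lemma finrank_withLp_prod_real [FiniteDimensional ℝ F] :
    finrank ℝ (WithLp 2 (F × ℝ)) = finrank ℝ F + 1 := by
  rw [(WithLp.linearEquiv 2 ℝ (F × ℝ)).finrank_eq, Module.finrank_prod, Module.finrank_self]

end Homogenization

theorem count_affine_separations (d n : ℕ) (hn : d + 1 ≤ n)
    (x : Fin n → EuclideanSpace ℝ (Fin d))
    (hgen : ∀ s : Finset (Fin n), s.card = d + 1 →
      AffineIndependent ℝ (fun i : s => x i)) :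
    {p : Set (Set (Fin n)) | ∃ A : Set (Fin n), p = {A, Aᶜ} ∧
      ∃ (w : EuclideanSpace ℝ (Fin d)) (c : ℝ),
        (∀ i ∈ A, c < ⟪w, x i⟫) ∧ (∀ i ∈ Aᶜ, ⟪w, x i⟫ < c)}.ncard
      = ∑ i ∈ Finset.range (d + 1), (n - 1).choose i := by
  obtain ⟨m, rfl⟩ : ∃ m, n = m + 1 := ⟨n - 1, by omega⟩
  have hgp : InLinearGeneralPosition (finrank ℝ (WithLp 2 (EuclideanSpace ℝ (Fin d) × ℝ)))
      (homogenize ∘ x) := by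
    rw [finrank_withLp_prod_real, finrank_euclideanSpace_fin]
    exact inLinearGeneralPosition_homogenize (by simpa using hn) hgen
  have hordered := ncard_linearDichotomies hgp
  rw [← affineDichotomies_eq_linearDichotomies, finrank_withLp_prod_real,
    finrank_euclideanSpace_fin] at hordered
  have hunordered := Set.two_mul_ncard_setOf_pair_compl (𝒮 := affineDichotomies x) fun A hA => by
    rw [affineDichotomies_eq_linearDichotomies] at hA ⊢
    exact compl_mem_linearDichotomies hA
  change {p | ∃ A, p = {A, Aᶜ} ∧ A ∈ affineDichotomies x}.ncard = _
  rw [Nat.add_sub_cancel]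
  omega
end
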